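/- arXiv:2008.01375 — 6 statements merged into one kernel-verified Lean document; each statement's English description precedes it below -/
import Mathlib

section
/- Let d ≥ 1, let y ~ N(0, I_d) be a standard Gaussian vector in ℝ^d, let v ∈ ℝ^d and r ≥ ‖v‖₂. Then P(‖y‖₂ ≤ r − ‖v‖₂) ≤ P(‖y + v‖₂ ≤ r) ≤ P(‖y‖₂ ≤ r); that is, the standard Gaussian measure of the Euclidean ball of radius r centered at −v is at most that of the ball of radius r centered at the origin, and at least that of the ball of radius r − ‖v‖₂ centered at the origin. -/
/-!
Rotation invariance of the standard Gaussian lets us move the centre `-v` of the ball onto the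
first coordinate axis. Integrating out the remaining coordinates (Fubini), every slice of the
shifted ball is an interval of the first coordinate, centred at `-‖v‖`, of the same length as
the corresponding centred slice of `{‖y‖ ≤ r}`; since the one-dimensional Gaussian density is
even and decreasing in `|x|`, the centred interval carries at least as much mass. The lower bound
is just the triangle inequality `{‖y‖ ≤ r - ‖v‖} ⊆ {‖y + v‖ ≤ r}`.
-/

open MeasureTheory ProbabilityTheory

/-- The Gaussian measure `N(μ, τ² I_d)` on `EuclideanSpace ℝ (Fin d)`, given as the product of
`d` one-dimensional Gaussian measures with means `μ k` and common variance `τ²`. -/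
noncomputable def gaussianPi (d : ℕ) (μ : EuclideanSpace ℝ (Fin d)) (τ : ℝ) :
    Measure (EuclideanSpace ℝ (Fin d)) :=
  (Measure.pi fun i => gaussianReal (μ i) (Real.toNNReal (τ ^ 2))).map
    (MeasurableEquiv.toLp 2 (Fin d → ℝ))

open Real Set Module intervalIntegral

theorem integral_shift_symmetric_interval_le {φ : ℝ → ℝ} (hφ : Continuous φ)
    (hφ_abs : ∀ x y, |x| ≤ |y| → φ y ≤ φ x) {a : ℝ} (ha : 0 ≤ a) (t : ℝ) :
    ∫ x in (t - a)..(t + a), φ x ≤ ∫ x in (-a)..a, φ x := by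
  have hint : ∀ u w, IntervalIntegrable φ volume u w := hφ.intervalIntegrable
  wlog ht : 0 ≤ t generalizing t
  · have hφ_neg : ∀ x, φ (-x) = φ x := fun x =>
      le_antisymm (hφ_abs _ _ (abs_neg x).ge) (hφ_abs _ _ (abs_neg x).le)
    calc ∫ x in (t - a)..(t + a), φ x = ∫ x in (-t - a)..(-t + a), φ (-x) := by
          rw [integral_comp_neg]; congr 1 <;> ring
      _ = ∫ x in (-t - a)..(-t + a), φ x := by simp_rw [hφ_neg]
      _ ≤ _ := this (-t) (by linarith)
  -- the two sides differ by `∫ a..t+a, φ` minus its translate by `-2a`,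
  -- and `|x - 2a| ≤ |x|` for `x ≥ a`
  have hright : ∫ x in a..(t + a), φ x ≤ ∫ x in (-a)..(t - a), φ x :=
    calc ∫ x in a..(t + a), φ x ≤ ∫ x in a..(t + a), φ (x - 2 * a) := by
          refine integral_mono_on (by linarith) (hint _ _)
            ((hφ.comp (continuous_sub_right _)).intervalIntegrable _ _) fun x hx => hφ_abs _ _ ?_
          rw [abs_of_nonneg (ha.trans hx.1)]
          exact abs_le.mpr ⟨by linarith [hx.1], by linarith⟩
      _ = ∫ x in (-a)..(t - a), φ x := by
          rw [integral_comp_sub_right]; congr 1 <;> ring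
  have hsplit₁ := integral_add_adjacent_intervals (hint (t - a) a) (hint a (t + a))
  have hsplit₂ := integral_add_adjacent_intervals (hint (-a) (t - a)) (hint (t - a) a)
  linarith

theorem gaussianReal_Icc_shift_le {a : ℝ} (ha : 0 ≤ a) (t : ℝ) :
    gaussianReal 0 1 (Icc (t - a) (t + a)) ≤ gaussianReal 0 1 (Icc (-a) a) := by
  simp only [gaussianReal_apply_eq_integral 0 one_ne_zero, integral_Icc_eq_integral_Ioc,
    ← integral_of_le (by linarith : t - a ≤ t + a), ← integral_of_le (by linarith : -a ≤ a)]
  refine ENNReal.ofReal_le_ofReal (integral_shift_symmetric_interval_le ?_ ?_ ha t)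
  · rw [gaussianPDFReal_def]; fun_prop
  · intro x y hxy
    simp only [gaussianPDFReal, sub_zero]
    gcongr _ * rexp (-?_ / _)
    exact sq_le_sq.mpr hxy

theorem gaussianReal_sq_add_le (c A : ℝ) :
    gaussianReal 0 1 {x | (x + c) ^ 2 ≤ A} ≤ gaussianReal 0 1 {x | x ^ 2 ≤ A} := by
  rcases lt_or_ge A 0 with hA | hA
  · have hempty : {x : ℝ | (x + c) ^ 2 ≤ A} = ∅ :=
      eq_empty_of_forall_notMem fun x hx => (hA.trans_le (sq_nonneg (x + c))).not_ge hx
    simp [hempty]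
  · have hIcc : ∀ c, {x : ℝ | (x + c) ^ 2 ≤ A} = Icc (-c - √A) (-c + √A) := by
      intro c; ext x
      simp only [mem_ofPred_eq, mem_Icc, Real.sq_le hA]
      constructor <;> rintro ⟨h₁, h₂⟩ <;> constructor <;> linarith
    rw [hIcc c, show {x : ℝ | x ^ 2 ≤ A} = Icc (-√A) √A by simpa using hIcc 0]
    simpa using gaussianReal_Icc_shift_le (sqrt_nonneg A) (-c)

theorem MeasureTheory.Measure.prod_le_prod_of_forall_slice_le {α β : Type*} [MeasurableSpace α]
    [MeasurableSpace β] {μ : Measure α} {ν : Measure β} [SFinite μ] [SFinite ν]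
    {s t : Set (α × β)} (hs : MeasurableSet s) (ht : MeasurableSet t)
    (h : ∀ y, μ ((fun x => (x, y)) ⁻¹' s) ≤ μ ((fun x => (x, y)) ⁻¹' t)) :
    μ.prod ν s ≤ μ.prod ν t := by
  rw [Measure.prod_apply_symm hs, Measure.prod_apply_symm ht]
  exact lintegral_mono h

theorem stdGaussian_ball_add_smul_single_eq (n : ℕ) (c : ℝ) {r : ℝ} (hr : 0 ≤ r) :
    stdGaussian (EuclideanSpace ℝ (Fin (n + 1)))
        {y | ‖y + c • EuclideanSpace.single 0 1‖ ≤ r} =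
      (gaussianReal 0 1).prod (Measure.pi fun _ : Fin n => gaussianReal 0 1)
        {p | (p.1 + c) ^ 2 + ∑ j, p.2 j ^ 2 ≤ r ^ 2} := by
  have hball : MeasurableSet {y : EuclideanSpace ℝ (Fin (n + 1)) |
      ‖y + c • EuclideanSpace.single 0 1‖ ≤ r} := measurableSet_le (by fun_prop) (by fun_prop)
  have hT : MeasurableSet {p : ℝ × (Fin n → ℝ) | (p.1 + c) ^ 2 + ∑ j, p.2 j ^ 2 ≤ r ^ 2} :=
    measurableSet_le (by fun_prop) (by fun_prop)
  rw [← map_pi_eq_stdGaussian, Measure.map_apply (by fun_prop) hball,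
    ← (measurePreserving_piFinSuccAbove (fun _ => gaussianReal 0 1) 0).measure_preimage
      hT.nullMeasurableSet]
  congr 1
  ext x
  simp only [mem_preimage, mem_ofPred_eq, ← sq_le_sq₀ (norm_nonneg _) hr,
    EuclideanSpace.real_norm_sq_eq, Fin.sum_univ_succ]
  simp [MeasurableEquiv.piFinSuccAbove_apply, Fin.tail, Fin.succ_ne_zero]

theorem stdGaussian_ball_add_smul_single_le (n : ℕ) (c r : ℝ) :
    stdGaussian (EuclideanSpace ℝ (Fin (n + 1))) {y | ‖y + c • EuclideanSpace.single 0 1‖ ≤ r} ≤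
      stdGaussian (EuclideanSpace ℝ (Fin (n + 1))) {y | ‖y‖ ≤ r} := by
  rcases lt_or_ge r 0 with hr | hr
  · have hempty : {y : EuclideanSpace ℝ (Fin (n + 1)) |
        ‖y + c • EuclideanSpace.single 0 1‖ ≤ r} = ∅ :=
      eq_empty_of_forall_notMem fun y hy => (hr.trans_le (norm_nonneg _)).not_ge hy
    simp [hempty]
  have h₀ := stdGaussian_ball_add_smul_single_eq n 0 hr
  simp only [zero_smul, add_zero] at h₀
  rw [stdGaussian_ball_add_smul_single_eq n c hr, h₀]
  refine Measure.prod_le_prod_of_forall_slice_le (measurableSet_le (by fun_prop) (by fun_prop))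
    (measurableSet_le (by fun_prop) (by fun_prop)) fun z => ?_
  simpa only [preimage_ofPred_eq, ← le_sub_iff_add_le] using
    gaussianReal_sq_add_le c (r ^ 2 - ∑ j, z j ^ 2)

section InnerProductSpace

variable {E : Type*} [NormedAddCommGroup E] [InnerProductSpace ℝ E] [FiniteDimensional ℝ E]

theorem exists_linearIsometryEquiv_apply_eq_norm_smul_single {n : ℕ} (hn : finrank ℝ E = n + 1)
    (v : E) : ∃ g : E ≃ₗᵢ[ℝ] EuclideanSpace ℝ (Fin (n + 1)),
      g v = ‖v‖ • EuclideanSpace.single 0 1 := by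
  let b := ((stdOrthonormalBasis ℝ E).reindex (finCongr hn)).repr
  have hnorm : ‖b v‖ = ‖‖v‖ • EuclideanSpace.single (0 : Fin (n + 1)) (1 : ℝ)‖ := by
    simp [norm_smul]
  exact ⟨b.trans (Submodule.reflection _), Submodule.reflection_sub hnorm⟩

variable [MeasurableSpace E] [BorelSpace E] {F : Type*} [NormedAddCommGroup F]
  [InnerProductSpace ℝ F] [FiniteDimensional ℝ F] [MeasurableSpace F] [BorelSpace F]

theorem stdGaussian_ball_add_map (f : E ≃ₗᵢ[ℝ] F) (v : E) (r : ℝ) :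
    stdGaussian F {z | ‖z + f v‖ ≤ r} = stdGaussian E {y | ‖y + v‖ ≤ r} := by
  rw [← stdGaussian_map f,
    Measure.map_apply f.continuous.measurable (measurableSet_le (by fun_prop) (by fun_prop))]
  congr 1
  ext y
  simp [← map_add, f.norm_map]

theorem stdGaussian_ball_add_le (v : E) (r : ℝ) :
    stdGaussian E {y | ‖y + v‖ ≤ r} ≤ stdGaussian E {y | ‖y‖ ≤ r} := by
  rcases hE : finrank ℝ E with _ | n
  · have : Subsingleton E := finrank_zero_iff.mp hE
    simp [Subsingleton.elim v 0]
  obtain ⟨g, hg⟩ := exists_linearIsometryEquiv_apply_eq_norm_smul_single hE v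
  have h₀ := stdGaussian_ball_add_map g 0 r
  simp only [map_zero, add_zero] at h₀
  rw [← stdGaussian_ball_add_map g, hg, ← h₀]
  exact stdGaussian_ball_add_smul_single_le n ‖v‖ r

end InnerProductSpace

theorem gaussianPi_zero_one (d : ℕ) :
    gaussianPi d 0 1 = stdGaussian (EuclideanSpace ℝ (Fin d)) := by
  simp [gaussianPi, MeasurableEquiv.coe_toLp, map_pi_eq_stdGaussian]

theorem gaussian_shifted_ball_bounds_general (d : ℕ) (v : EuclideanSpace ℝ (Fin d))
    (r : ℝ) :
    (gaussianPi d 0 1) {y : EuclideanSpace ℝ (Fin d) | ‖y‖ ≤ r - ‖v‖} ≤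
        (gaussianPi d 0 1) {y : EuclideanSpace ℝ (Fin d) | ‖y + v‖ ≤ r} ∧
      (gaussianPi d 0 1) {y : EuclideanSpace ℝ (Fin d) | ‖y + v‖ ≤ r} ≤
        (gaussianPi d 0 1) {y : EuclideanSpace ℝ (Fin d) | ‖y‖ ≤ r} := by
  rw [gaussianPi_zero_one]
  refine ⟨measure_mono fun y hy => ?_, stdGaussian_ball_add_le v r⟩
  exact (norm_add_le y v).trans (le_sub_iff_add_le.mp hy)

/-- For `y ~ N(0, I_d)`, `v ∈ ℝ^d` and `r ≥ ‖v‖`: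
`P(‖y‖ ≤ r − ‖v‖) ≤ P(‖y + v‖ ≤ r) ≤ P(‖y‖ ≤ r)`. -/
theorem gaussian_shifted_ball_bounds (d : ℕ) (hd : 1 ≤ d) (v : EuclideanSpace ℝ (Fin d))
    (r : ℝ) (hr : ‖v‖ ≤ r) :
    (gaussianPi d 0 1) {y : EuclideanSpace ℝ (Fin d) | ‖y‖ ≤ r - ‖v‖} ≤
        (gaussianPi d 0 1) {y : EuclideanSpace ℝ (Fin d) | ‖y + v‖ ≤ r} ∧
      (gaussianPi d 0 1) {y : EuclideanSpace ℝ (Fin d) | ‖y + v‖ ≤ r} ≤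
        (gaussianPi d 0 1) {y : EuclideanSpace ℝ (Fin d) | ‖y‖ ≤ r} :=
  gaussian_shifted_ball_bounds_general d v r
end

section
/- Let d ≥ 1, let S be a symmetric real d×d matrix such that I − S is positive definite, let b ∈ ℝ^d, and let y ~ N(0, I_d). Then E[exp(½ ⟨y, S y⟩ + ⟨b, y⟩)] = det(I − S)^{−1/2} · exp(½ ⟨b, (I − S)^{−1} b⟩). -/
/-!
Under `N(0, I_d)` the density is `(2π)^{-d/2} exp(-½⟨y, y⟩)`, so the expectation is
`(2π)^{-d/2}` times the Lebesgue integral of `exp(-½⟨y, A y⟩ + ⟨b, y⟩)` with `A = I - S`.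
Completing the square around `A⁻¹ b` and translating removes the linear term at the cost of the
factor `exp(½⟨b, A⁻¹ b⟩)`. Writing the positive definite `A` as `Bᵀ B` and substituting `u = B y`
turns the remaining integral into the standard one, `(2π)^{d/2}`, times `|det B|⁻¹ = det(A)^{-1/2}`.
-/

open MeasureTheory ProbabilityTheory Matrix

open scoped ENNReal
open Real

namespace MeasureTheory

theorem lintegral_fin_nat_prod_eq_prod {n : ℕ} {E : Type*} [MeasurableSpace E]
    {μ : Fin n → Measure E} [∀ i, SigmaFinite (μ i)]
    {f : Fin n → E → ℝ≥0∞} (hf : ∀ i, Measurable (f i)) :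
    ∫⁻ x : Fin n → E, ∏ i, f i (x i) ∂(Measure.pi μ) = ∏ i, ∫⁻ x, f i x ∂(μ i) := by
  induction n with
  | zero => simp
  | succ n ih =>
    calc
      _ = ∫⁻ x : E × (Fin n → E), f 0 x.1 * ∏ i : Fin n, f (Fin.succ i) (x.2 i)
            ∂((μ 0).prod (Measure.pi (fun i ↦ μ i.succ))) := by
        rw [← ((measurePreserving_piFinSuccAbove μ 0).symm).lintegral_comp_emb
          (MeasurableEquiv.measurableEmbedding _)]
        simp_rw [MeasurableEquiv.piFinSuccAbove_symm_apply, Fin.insertNthEquiv,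
          Fin.prod_univ_succ, Fin.insertNth_zero, Equiv.coe_fn_mk, Fin.cons_succ,
          Fin.zero_succAbove, cast_eq, Fin.cons_zero]
      _ = (∫⁻ x, f 0 x ∂μ 0) * ∏ i : Fin n, ∫⁻ x, f i.succ x ∂(μ i.succ) := by
        rw [← ih fun i ↦ hf i.succ, lintegral_prod_mul (f := f 0)
          (g := fun y : Fin n → E ↦ ∏ i, f i.succ (y i)) (hf 0).aemeasurable
          (Finset.measurable_prod _ fun i _ ↦ (hf i.succ).comp (measurable_pi_apply i)).aemeasurable]
      _ = ∏ i, ∫⁻ x, f i x ∂(μ i) := (Fin.prod_univ_succ fun i ↦ ∫⁻ x, f i x ∂(μ i)).symm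

theorem lintegral_fintype_prod_eq_prod {ι : Type*} [Fintype ι] {E : Type*} [MeasurableSpace E]
    {μ : ι → Measure E} [∀ i, SigmaFinite (μ i)]
    {f : ι → E → ℝ≥0∞} (hf : ∀ i, Measurable (f i)) :
    ∫⁻ x : ι → E, ∏ i, f i (x i) ∂(Measure.pi μ) = ∏ i, ∫⁻ x, f i x ∂(μ i) := by
  let e := (Fintype.equivFin ι).symm
  rw [← (measurePreserving_piCongrLeft _ e).lintegral_comp_emb
    (MeasurableEquiv.measurableEmbedding _)]
  simp_rw [← e.prod_comp, MeasurableEquiv.coe_piCongrLeft, Equiv.piCongrLeft_apply_apply]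
  exact lintegral_fin_nat_prod_eq_prod fun i ↦ hf (e i)

theorem Measure.pi_withDensity {ι : Type*} [Fintype ι] {E : Type*} [MeasurableSpace E]
    (μ : ι → Measure E) [∀ i, SigmaFinite (μ i)]
    {f : ι → E → ℝ≥0∞} (hf : ∀ i, Measurable (f i))
    [∀ i, SigmaFinite ((μ i).withDensity (f i))] :
    Measure.pi (fun i ↦ (μ i).withDensity (f i))
      = (Measure.pi μ).withDensity fun x ↦ ∏ i, f i (x i) := by
  refine Measure.pi_eq fun s hs ↦ ?_
  have hbox : (Set.univ.pi s).indicator (fun x ↦ ∏ i, f i (x i))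
      = fun x ↦ ∏ i, (s i).indicator (f i) (x i) := by
    funext x
    classical
    simp only [Set.indicator_apply, Finset.prod_ite_zero, Set.mem_univ_pi, Finset.mem_univ,
      forall_const]
  rw [withDensity_apply _ (MeasurableSet.univ_pi hs),
    ← lintegral_indicator (MeasurableSet.univ_pi hs), hbox,
    lintegral_fintype_prod_eq_prod fun i ↦ (hf i).indicator (hs i)]
  simp_rw [lintegral_indicator (hs _), withDensity_apply _ (hs _)]

end MeasureTheory

section GaussianIntegral

variable {ι : Type*} [Fintype ι]

theorem integral_exp_neg_half_dotProduct_self :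
    ∫ x : ι → ℝ, exp (-(1 / 2) * (x ⬝ᵥ x)) = √(2 * π) ^ Fintype.card ι := by
  have h1 : ∫ t : ℝ, exp (-(1 / 2) * t ^ 2) = √(2 * π) := by
    rw [integral_gaussian]
    congr 1
    ring
  simp_rw [dotProduct, Finset.mul_sum, Real.exp_sum, ← sq]
  rw [volume_pi, integral_fintype_prod_eq_pow (fun t ↦ exp (-(1 / 2) * t ^ 2)), h1]

theorem pi_gaussianReal_zero_one_eq_withDensity :
    Measure.pi (fun _ : ι ↦ gaussianReal 0 1)
      = volume.withDensity fun x ↦ ∏ i, gaussianPDF 0 1 (x i) := by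
  have : SigmaFinite (volume.withDensity (gaussianPDF 0 1)) := by
    rw [← gaussianReal_of_var_ne_zero 0 one_ne_zero]
    infer_instance
  rw [gaussianReal_of_var_ne_zero 0 one_ne_zero,
    Measure.pi_withDensity _ fun _ ↦ measurable_gaussianPDF 0 1, volume_pi]

theorem integral_pi_gaussianReal_zero_one (f : (ι → ℝ) → ℝ) :
    ∫ x, f x ∂(Measure.pi fun _ : ι ↦ gaussianReal 0 1)
      = (√(2 * π))⁻¹ ^ Fintype.card ι * ∫ x, exp (-(1 / 2) * (x ⬝ᵥ x)) * f x := by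
  have hdens (x : ι → ℝ) : (∏ i, gaussianPDF 0 1 (x i)).toReal
      = (√(2 * π))⁻¹ ^ Fintype.card ι * exp (-(1 / 2) * (x ⬝ᵥ x)) := by
    rw [ENNReal.toReal_prod]
    simp_rw [gaussianPDF, ENNReal.toReal_ofReal (gaussianPDFReal_nonneg 0 1 _)]
    simp only [gaussianPDFReal, NNReal.coe_one, mul_one, sub_zero]
    rw [Finset.prod_mul_distrib, Finset.prod_const, Finset.card_univ, ← Real.exp_sum, dotProduct,
      Finset.mul_sum]
    congr 2
    exact Finset.sum_congr rfl fun i _ ↦ by ring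
  rw [pi_gaussianReal_zero_one_eq_withDensity, integral_withDensity_eq_integral_toReal_smul
      (f := fun x : ι → ℝ ↦ ∏ i, gaussianPDF 0 1 (x i)) (by fun_prop)
      (ae_of_all _ fun x ↦ ENNReal.prod_lt_top fun i _ ↦ ENNReal.ofReal_lt_top)]
  simp_rw [hdens, smul_eq_mul, mul_assoc]
  exact integral_const_mul _ _

variable [DecidableEq ι]

theorem integral_comp_mulVec {E : Type*} [NormedAddCommGroup E] [NormedSpace ℝ E]
    {B : Matrix ι ι ℝ} (hB : B.det ≠ 0) (f : (ι → ℝ) → E) :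
    ∫ x, f (B *ᵥ x) = |B.det|⁻¹ • ∫ x, f x := by
  have hφ : LinearMap.det (toLin' B) ≠ 0 := by rwa [LinearMap.det_toLin']
  let e := (LinearMap.equivOfDetNeZero _ hφ).toContinuousLinearEquiv
  change ∫ x, f (e.toHomeomorph x) = _
  rw [← e.toHomeomorph.measurableEmbedding.integral_map,
    show ⇑e.toHomeomorph = toLin' B from rfl,
    Real.map_linearMap_volume_pi_eq_smul_volume_pi hφ, integral_smul_measure,
    LinearMap.det_toLin', abs_inv, ENNReal.toReal_ofReal (by positivity)]

open scoped MatrixOrder in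
theorem integral_exp_neg_half_dotProduct_mulVec {A : Matrix ι ι ℝ} (hA : A.PosDef) :
    ∫ x : ι → ℝ, exp (-(1 / 2) * (x ⬝ᵥ A *ᵥ x))
      = √(2 * π) ^ Fintype.card ι * A.det ^ (-(1 / 2) : ℝ) := by
  obtain ⟨B, hBunit, rfl⟩ := CStarAlgebra.isStrictlyPositive_iff_eq_star_mul_self.mp
    hA.isStrictlyPositive
  have hB : B.det ≠ 0 := (isUnit_iff_isUnit_det B).mp hBunit |>.ne_zero
  have hdet : (star B * B).det = |B.det| ^ 2 := by
    rw [star_eq_conjTranspose, det_mul, det_conjTranspose, sq_abs, sq]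
    rfl
  have hquad (x : ι → ℝ) : x ⬝ᵥ (star B * B) *ᵥ x = B *ᵥ x ⬝ᵥ B *ᵥ x := by
    rw [← mulVec_mulVec, dotProduct_mulVec, star_eq_conjTranspose,
      conjTranspose_eq_transpose_of_trivial, vecMul_transpose]
  simp_rw [hquad]
  rw [integral_comp_mulVec hB (fun y ↦ exp (-(1 / 2) * (y ⬝ᵥ y))),
    integral_exp_neg_half_dotProduct_self, hdet, ← Real.rpow_natCast |B.det| 2,
    ← Real.rpow_mul (abs_nonneg _)]
  norm_num [Real.rpow_neg_one, mul_comm]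

theorem dotProduct_mulVec_sub_inv_mulVec {A : Matrix ι ι ℝ} (hA : A.IsSymm)
    (hdet : IsUnit A.det) (b x : ι → ℝ) :
    (x - A⁻¹ *ᵥ b) ⬝ᵥ A *ᵥ (x - A⁻¹ *ᵥ b)
      = x ⬝ᵥ A *ᵥ x - 2 * (b ⬝ᵥ x) + b ⬝ᵥ A⁻¹ *ᵥ b := by
  have hAm : A *ᵥ (A⁻¹ *ᵥ b) = b := by
    rw [mulVec_mulVec, mul_nonsing_inv _ hdet, one_mulVec]
  have hmA : A⁻¹ *ᵥ b ⬝ᵥ A *ᵥ x = b ⬝ᵥ x := by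
    rw [dotProduct_mulVec, ← mulVec_transpose, hA.eq, hAm]
  rw [mulVec_sub, hAm, sub_dotProduct, dotProduct_sub, dotProduct_sub, hmA,
    dotProduct_comm x b, dotProduct_comm _ b]
  ring

theorem integral_exp_neg_half_dotProduct_mulVec_add_dotProduct {A : Matrix ι ι ℝ}
    (hA : A.PosDef) (b : ι → ℝ) :
    ∫ x : ι → ℝ, exp (-(1 / 2) * (x ⬝ᵥ A *ᵥ x) + b ⬝ᵥ x)
      = √(2 * π) ^ Fintype.card ι * A.det ^ (-(1 / 2) : ℝ)
        * exp ((1 / 2) * (b ⬝ᵥ A⁻¹ *ᵥ b)) := by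
  have hsq (x : ι → ℝ) : exp (-(1 / 2) * (x ⬝ᵥ A *ᵥ x) + b ⬝ᵥ x)
      = exp ((1 / 2) * (b ⬝ᵥ A⁻¹ *ᵥ b))
        * exp (-(1 / 2) * ((x - A⁻¹ *ᵥ b) ⬝ᵥ A *ᵥ (x - A⁻¹ *ᵥ b))) := by
    rw [← exp_add, dotProduct_mulVec_sub_inv_mulVec
      (isHermitian_iff_isSymm.mp hA.isHermitian) hA.det_pos.ne'.isUnit]
    ring_nf
  simp_rw [hsq]
  rw [integral_const_mul, integral_sub_right_eq_self
    (fun x ↦ exp (-(1 / 2) * (x ⬝ᵥ A *ᵥ x))), integral_exp_neg_half_dotProduct_mulVec hA]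
  ring

end GaussianIntegral

theorem gaussian_quadratic_exponential_moment_general (d : ℕ)
    (S : Matrix (Fin d) (Fin d) ℝ) (hpos : (1 - S).PosDef)
    (b : Fin d → ℝ) :
    ∫ y, Real.exp ((1 / 2) * ((y : Fin d → ℝ) ⬝ᵥ S.mulVec (y : Fin d → ℝ))
          + b ⬝ᵥ (y : Fin d → ℝ)) ∂(gaussianPi d 0 1)
      = ((1 - S).det) ^ (-(1 / 2) : ℝ) *
        Real.exp ((1 / 2) * (b ⬝ᵥ (1 - S)⁻¹.mulVec b)) := by
  have hstd : gaussianPi d 0 1 = (Measure.pi fun _ : Fin d ↦ gaussianReal 0 1).map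
      (MeasurableEquiv.toLp 2 (Fin d → ℝ)) := by
    simp [gaussianPi]
  have hexp (x : Fin d → ℝ) :
      exp (-(1 / 2) * (x ⬝ᵥ x)) * exp ((1 / 2) * (x ⬝ᵥ S *ᵥ x) + b ⬝ᵥ x)
        = exp (-(1 / 2) * (x ⬝ᵥ (1 - S) *ᵥ x) + b ⬝ᵥ x) := by
    rw [← exp_add, sub_mulVec, one_mulVec, dotProduct_sub]
    ring_nf
  have hnorm : (√(2 * π))⁻¹ ^ d * √(2 * π) ^ d = 1 := by
    rw [← mul_pow, inv_mul_cancel₀ (by positivity), one_pow]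
  rw [hstd, integral_map_equiv]
  simp only [MeasurableEquiv.toLp_apply]
  rw [integral_pi_gaussianReal_zero_one]
  simp_rw [hexp]
  rw [integral_exp_neg_half_dotProduct_mulVec_add_dotProduct hpos, Fintype.card_fin,
    ← mul_assoc, ← mul_assoc, hnorm, one_mul]

/-- Gaussian quadratic exponential moment: if `S` is symmetric with `I - S` positive definite
and `y ~ N(0, I_d)`, then
`E[exp(½ ⟨y, S y⟩ + ⟨b, y⟩)] = det(I − S)^{−1/2} · exp(½ ⟨b, (I − S)⁻¹ b⟩)`. -/
theorem gaussian_quadratic_exponential_moment (d : ℕ) (hd : 1 ≤ d)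
    (S : Matrix (Fin d) (Fin d) ℝ) (hsymm : S.IsSymm) (hpos : (1 - S).PosDef)
    (b : Fin d → ℝ) :
    ∫ y, Real.exp ((1 / 2) * ((y : Fin d → ℝ) ⬝ᵥ S.mulVec (y : Fin d → ℝ))
          + b ⬝ᵥ (y : Fin d → ℝ)) ∂(gaussianPi d 0 1)
      = ((1 - S).det) ^ (-(1 / 2) : ℝ) *
        Real.exp ((1 / 2) * (b ⬝ᵥ (1 - S)⁻¹.mulVec b)) :=
  gaussian_quadratic_exponential_moment_general d S hpos b
end

section
/- Let d ≥ 1, μ ∈ ℝ^d, and let H be a symmetric real d×d matrix. Then there exist constants C > 0 and τ₀ > 0 such that for all τ ∈ (0, τ₀), if z₁, z₂ are independent random vectors each distributed N(μ, τ² I_d), then exp(μᵀHμ) ≤ E[exp(⟨z₁, H z₂⟩)] ≤ (1 + C τ²) exp(μᵀHμ). -/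
/-!
Integrating out `z₂` first, the Gaussian moment generating function gives
`E[exp ⟨z₁, H z₂⟩ | z₁] = exp (⟨z₁, Hμ⟩ + τ² ‖Hᵀ z₁‖² / 2)`. Dropping the quadratic term and
applying the moment generating function once more gives the lower bound. For the upper bound,
`‖Hᵀ z₁‖² ≤ ‖H‖_F² ‖z₁‖²` reduces everything to one-dimensional integrals `E[exp (b x + c x²)]`,
which have a closed form; the resulting bound is a differentiable function of `τ²` equal to
`exp (μᵀHμ)` at `τ = 0`, hence at most `(1 + C τ²) exp (μᵀHμ)` for small `τ`.
-/

open MeasureTheory ProbabilityTheory Matrix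

open Real Filter Topology
open scoped NNReal

theorem integral_exp_neg_mul_sq_add_mul_add {B : ℝ} (hB : 0 < B) (c e : ℝ) :
    ∫ x : ℝ, exp (-B * x ^ 2 + c * x + e) = √(π / B) * exp (e + c ^ 2 / (4 * B)) := by
  have hsq (x : ℝ) :
      -B * x ^ 2 + c * x + e = -B * (x + -c / (2 * B)) ^ 2 + (e + c ^ 2 / (4 * B)) := by
    field_simp
    ring
  simp_rw [hsq, exp_add, integral_mul_const]
  rw [integral_add_right_eq_self (fun x ↦ exp (-B * x ^ 2)), integral_gaussian]

theorem integral_exp_mul_add_mul_sq_gaussianReal (m b c : ℝ) {v : ℝ≥0} (hv : v ≠ 0)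
    (hcv : 2 * c * v < 1) :
    ∫ x, exp (b * x + c * x ^ 2) ∂gaussianReal m v =
      (√(1 - 2 * c * v))⁻¹ * exp ((b * m + c * m ^ 2 + v * b ^ 2 / 2) / (1 - 2 * c * v)) := by
  have hu : 0 < 1 - 2 * c * v := by linarith
  have hdensity (x : ℝ) : gaussianPDFReal m v x • exp (b * x + c * x ^ 2) =
      (√(2 * π * v))⁻¹ *
        exp (-((1 - 2 * c * v) / (2 * v)) * x ^ 2 + (b + m / v) * x - m ^ 2 / (2 * v)) := by
    rw [gaussianPDFReal, smul_eq_mul, mul_assoc, ← exp_add]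
    congr 2
    field_simp
    ring
  rw [integral_gaussianReal_eq_integral_smul hv]
  simp_rw [hdensity, sub_eq_add_neg _ (m ^ 2 / (2 * v))]
  rw [integral_const_mul, integral_exp_neg_mul_sq_add_mul_add (by positivity),
    show π / ((1 - 2 * c * v) / (2 * v)) = 2 * π * v / (1 - 2 * c * v) by field_simp,
    sqrt_div' _ hu.le, div_eq_mul_inv, ← mul_assoc, inv_mul_cancel_left₀ (by positivity)]
  congr 2
  have hu' : 1 - 2 * v * c ≠ 0 := by linarith
  field_simp
  ring

section Pi

variable {ι : Type*} [Fintype ι]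

theorem integral_exp_dotProduct_add_mul_pi_gaussianReal (m w : ι → ℝ) (c : ℝ) {v : ℝ≥0}
    (hv : v ≠ 0) (hcv : 2 * c * v < 1) :
    ∫ x, exp (w ⬝ᵥ x + c * (x ⬝ᵥ x)) ∂Measure.pi (fun i ↦ gaussianReal (m i) v) =
      (√(1 - 2 * c * v))⁻¹ ^ Fintype.card ι *
        exp ((w ⬝ᵥ m + c * (m ⬝ᵥ m) + v * (w ⬝ᵥ w) / 2) / (1 - 2 * c * v)) := by
  have hprod (x : ι → ℝ) :
      exp (w ⬝ᵥ x + c * (x ⬝ᵥ x)) = ∏ i, exp (w i * x i + c * x i ^ 2) := by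
    simp only [dotProduct, Finset.mul_sum, ← Finset.sum_add_distrib, exp_sum, sq]
  simp_rw [hprod]
  rw [integral_fintype_prod_eq_prod (fun i t ↦ exp (w i * t + c * t ^ 2))]
  simp_rw [integral_exp_mul_add_mul_sq_gaussianReal _ _ _ hv hcv]
  rw [Finset.prod_mul_distrib, Finset.prod_const, Finset.card_univ, ← exp_sum, ← Finset.sum_div]
  congr 3
  simp only [dotProduct, Finset.mul_sum, ← Finset.sum_add_distrib, Finset.sum_div]
  exact Finset.sum_congr rfl fun i _ ↦ by ring

theorem integral_exp_dotProduct_pi_gaussianReal (m w : ι → ℝ) {v : ℝ≥0} (hv : v ≠ 0) :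
    ∫ x, exp (w ⬝ᵥ x) ∂Measure.pi (fun i ↦ gaussianReal (m i) v) =
      exp (w ⬝ᵥ m + v * (w ⬝ᵥ w) / 2) := by
  simpa using integral_exp_dotProduct_add_mul_pi_gaussianReal m w 0 hv (by simp)

theorem integral_exp_dotProduct_mulVec_pi_gaussianReal (m x : ι → ℝ) (H : Matrix ι ι ℝ)
    {v : ℝ≥0} (hv : v ≠ 0) :
    ∫ y, exp (x ⬝ᵥ H *ᵥ y) ∂Measure.pi (fun i ↦ gaussianReal (m i) v) =
      exp (x ⬝ᵥ H *ᵥ m + v * ((x ᵥ* H) ⬝ᵥ (x ᵥ* H)) / 2) := by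
  simp_rw [dotProduct_mulVec]
  exact integral_exp_dotProduct_pi_gaussianReal m _ hv

theorem vecMul_dotProduct_vecMul_le (x : ι → ℝ) (H : Matrix ι ι ℝ) :
    (x ᵥ* H) ⬝ᵥ (x ᵥ* H) ≤ (∑ i, ∑ j, H i j ^ 2) * (x ⬝ᵥ x) := by
  calc (x ᵥ* H) ⬝ᵥ (x ᵥ* H) = ∑ j, (∑ i, x i * H i j) ^ 2 := by
        simp only [dotProduct, vecMul, sq]
    _ ≤ ∑ j, (∑ i, x i ^ 2) * ∑ i, H i j ^ 2 :=
        Finset.sum_le_sum fun j _ ↦ Finset.sum_mul_sq_le_sq_mul_sq _ _ _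
    _ = (∑ i, ∑ j, H i j ^ 2) * (x ⬝ᵥ x) := by
        rw [← Finset.mul_sum, Finset.sum_comm, mul_comm]
        simp only [dotProduct, sq]

theorem integral_prod_exp_dotProduct_mulVec_pi_gaussianReal (m : ι → ℝ) (H : Matrix ι ι ℝ)
    {v : ℝ≥0} (hv : v ≠ 0)
    (hint : Integrable (fun x ↦ exp (x ⬝ᵥ H *ᵥ m + v * ((x ᵥ* H) ⬝ᵥ (x ᵥ* H)) / 2))
      (Measure.pi fun i ↦ gaussianReal (m i) v)) :
    ∫ p, exp (p.1 ⬝ᵥ H *ᵥ p.2) ∂(Measure.pi fun i ↦ gaussianReal (m i) v).prod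
        (Measure.pi fun i ↦ gaussianReal (m i) v) =
      ∫ x, exp (x ⬝ᵥ H *ᵥ m + v * ((x ᵥ* H) ⬝ᵥ (x ᵥ* H)) / 2)
        ∂Measure.pi fun i ↦ gaussianReal (m i) v := by
  have hinner (x : ι → ℝ) := integral_exp_dotProduct_mulVec_pi_gaussianReal m x H hv
  have hcont : Continuous fun p : (ι → ℝ) × (ι → ℝ) ↦ exp (p.1 ⬝ᵥ H *ᵥ p.2) := by fun_prop
  have hprod : Integrable (fun p : (ι → ℝ) × (ι → ℝ) ↦ exp (p.1 ⬝ᵥ H *ᵥ p.2))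
      ((Measure.pi fun i ↦ gaussianReal (m i) v).prod
        (Measure.pi fun i ↦ gaussianReal (m i) v)) := by
    refine (integrable_prod_iff hcont.aestronglyMeasurable).2 ⟨ae_of_all _ fun x ↦ ?_, ?_⟩
    · exact Integrable.of_integral_ne_zero (by rw [hinner]; positivity)
    · simp_rw [norm_of_nonneg (exp_nonneg _), hinner]
      exact hint
  rw [integral_prod _ hprod]
  exact integral_congr_ae (ae_of_all _ hinner)

theorem exp_dotProduct_mulVec_le_integral_and_integral_le (m : ι → ℝ) (H : Matrix ι ι ℝ)
    {v : ℝ≥0} (hv : v ≠ 0) (hMv : (∑ i, ∑ j, H i j ^ 2) * v ^ 2 < 1) :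
    exp (m ⬝ᵥ H *ᵥ m) ≤
        ∫ p, exp (p.1 ⬝ᵥ H *ᵥ p.2) ∂(Measure.pi fun i ↦ gaussianReal (m i) v).prod
          (Measure.pi fun i ↦ gaussianReal (m i) v) ∧
      ∫ p, exp (p.1 ⬝ᵥ H *ᵥ p.2) ∂(Measure.pi fun i ↦ gaussianReal (m i) v).prod
        (Measure.pi fun i ↦ gaussianReal (m i) v) ≤
      (√(1 - (∑ i, ∑ j, H i j ^ 2) * v ^ 2))⁻¹ ^ Fintype.card ι *
        exp ((m ⬝ᵥ H *ᵥ m +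
            v * (((∑ i, ∑ j, H i j ^ 2) * (m ⬝ᵥ m) + (H *ᵥ m) ⬝ᵥ (H *ᵥ m)) / 2)) /
          (1 - (∑ i, ∑ j, H i j ^ 2) * v ^ 2)) := by
  set P := Measure.pi fun i ↦ gaussianReal (m i) v
  set M := ∑ i, ∑ j, H i j ^ 2
  set w := H *ᵥ m
  have hcv : 2 * (M * v / 2) * v < 1 := by
    linarith [show 2 * (M * v / 2) * v = M * v ^ 2 by ring]
  have hupper := integral_exp_dotProduct_add_mul_pi_gaussianReal m w (M * v / 2) hv hcv
  have hupper_int : Integrable (fun x ↦ exp (w ⬝ᵥ x + M * v / 2 * (x ⬝ᵥ x))) P :=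
    .of_integral_ne_zero (by rw [hupper]; positivity)
  have hlower := integral_exp_dotProduct_pi_gaussianReal m w hv
  have hlower_int : Integrable (fun x ↦ exp (w ⬝ᵥ x)) P :=
    .of_integral_ne_zero (by rw [hlower]; positivity)
  have hle_upper (x : ι → ℝ) : exp (x ⬝ᵥ w + v * ((x ᵥ* H) ⬝ᵥ (x ᵥ* H)) / 2) ≤
      exp (w ⬝ᵥ x + M * v / 2 * (x ⬝ᵥ x)) := by
    rw [dotProduct_comm, exp_le_exp]
    nlinarith [mul_le_mul_of_nonneg_left (vecMul_dotProduct_vecMul_le x H) v.coe_nonneg]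
  have hint : Integrable (fun x ↦ exp (x ⬝ᵥ w + v * ((x ᵥ* H) ⬝ᵥ (x ᵥ* H)) / 2)) P :=
    hupper_int.mono' (by fun_prop : Continuous _).aestronglyMeasurable
      (ae_of_all _ fun x ↦ (norm_of_nonneg (exp_nonneg _)).trans_le (hle_upper x))
  rw [integral_prod_exp_dotProduct_mulVec_pi_gaussianReal m H hv hint]
  constructor
  · calc exp (m ⬝ᵥ w) ≤ exp (w ⬝ᵥ m + v * (w ⬝ᵥ w) / 2) := by
          rw [dotProduct_comm, exp_le_exp]
          have : 0 ≤ w ⬝ᵥ w := by simpa using dotProduct_self_star_nonneg w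
          linarith [mul_nonneg v.coe_nonneg this]
      _ = ∫ x, exp (w ⬝ᵥ x) ∂P := hlower.symm
      _ ≤ _ := integral_mono hlower_int hint fun x ↦ by
          rw [dotProduct_comm, exp_le_exp]
          have : 0 ≤ (x ᵥ* H) ⬝ᵥ (x ᵥ* H) := by
            simpa using dotProduct_self_star_nonneg (x ᵥ* H)
          linarith [mul_nonneg v.coe_nonneg this]
  · calc _ ≤ ∫ x, exp (w ⬝ᵥ x + M * v / 2 * (x ⬝ᵥ x)) ∂P :=
          integral_mono hint hupper_int hle_upper
      _ = _ := by
          rw [hupper, dotProduct_comm w m, show 2 * (M * v / 2) * v = M * v ^ 2 by ring,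
            show m ⬝ᵥ w + M * v / 2 * (m ⬝ᵥ m) + v * (w ⬝ᵥ w) / 2 =
              m ⬝ᵥ w + v * ((M * (m ⬝ᵥ m) + w ⬝ᵥ w) / 2) by ring]

theorem exists_pos_eventually_le_one_add_mul {f : ℝ → ℝ} (hf : DifferentiableAt ℝ f 0)
    (h0 : 0 < f 0) : ∃ C > 0, ∀ᶠ v in 𝓝[>] 0, f v ≤ (1 + C * v) * f 0 := by
  obtain ⟨c, hc, hO⟩ := hf.isBigO_sub.exists_pos
  refine ⟨c / f 0, by positivity, ?_⟩
  filter_upwards [nhdsWithin_le_nhds hO.bound, self_mem_nhdsWithin] with v hv (hv0 : 0 < v)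
  rw [sub_zero, norm_of_nonneg hv0.le, norm_eq_abs] at hv
  rw [add_mul, one_mul, mul_right_comm, div_mul_cancel₀ _ h0.ne']
  linarith [le_abs_self (f v - f 0)]

theorem exists_pos_eventually_integral_exp_dotProduct_mulVec_le (m : ι → ℝ)
    (H : Matrix ι ι ℝ) :
    ∃ C > 0, ∀ᶠ v in 𝓝[>] (0 : ℝ),
      exp (m ⬝ᵥ H *ᵥ m) ≤ ∫ p, exp (p.1 ⬝ᵥ H *ᵥ p.2)
          ∂(Measure.pi fun i ↦ gaussianReal (m i) v.toNNReal).prod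
            (Measure.pi fun i ↦ gaussianReal (m i) v.toNNReal) ∧
        ∫ p, exp (p.1 ⬝ᵥ H *ᵥ p.2) ∂(Measure.pi fun i ↦ gaussianReal (m i) v.toNNReal).prod
            (Measure.pi fun i ↦ gaussianReal (m i) v.toNNReal) ≤
          (1 + C * v) * exp (m ⬝ᵥ H *ᵥ m) := by
  set M := ∑ i, ∑ j, H i j ^ 2
  set K := (M * (m ⬝ᵥ m) + (H *ᵥ m) ⬝ᵥ (H *ᵥ m)) / 2
  set f := fun v : ℝ ↦
    (√(1 - M * v ^ 2))⁻¹ ^ Fintype.card ι * exp ((m ⬝ᵥ H *ᵥ m + v * K) / (1 - M * v ^ 2))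
  have hf0 : f 0 = exp (m ⬝ᵥ H *ᵥ m) := by simp [f]
  obtain ⟨C, hC, hbound⟩ := exists_pos_eventually_le_one_add_mul (f := f)
    (by fun_prop (disch := norm_num)) (hf0 ▸ exp_pos _)
  have hsmall : ∀ᶠ v in 𝓝[>] (0 : ℝ), M * v ^ 2 < 1 :=
    nhdsWithin_le_nhds <| ContinuousAt.eventually_lt (by fun_prop) continuousAt_const (by simp)
  refine ⟨C, hC, ?_⟩
  filter_upwards [hbound, hsmall, self_mem_nhdsWithin] with v hfv hMv (hv : 0 < v)
  have hv' : (v.toNNReal : ℝ) = v := Real.coe_toNNReal _ hv.le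
  obtain ⟨hlower, hupper⟩ := exp_dotProduct_mulVec_le_integral_and_integral_le m H
    (v := v.toNNReal) (by simpa using hv) (by rwa [hv'])
  rw [hv'] at hupper
  rw [hf0] at hfv
  exact ⟨hlower, hupper.trans hfv⟩

end Pi

theorem integral_prod_gaussianPi (d : ℕ) (μ : EuclideanSpace ℝ (Fin d)) (τ : ℝ)
    (f : (Fin d → ℝ) × (Fin d → ℝ) → ℝ) :
    ∫ p, f (p.1, p.2) ∂(gaussianPi d μ τ).prod (gaussianPi d μ τ) =
      ∫ p, f p ∂(Measure.pi fun i ↦ gaussianReal (μ i) (τ ^ 2).toNNReal).prod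
        (Measure.pi fun i ↦ gaussianReal (μ i) (τ ^ 2).toNNReal) := by
  set e := MeasurableEquiv.toLp 2 (Fin d → ℝ)
  rw [gaussianPi, Measure.map_prod_map _ _ e.measurable e.measurable,
    show Prod.map ⇑e ⇑e = ⇑(e.prodCongr e) from rfl, integral_map_equiv]
  rfl

theorem bilinear_gaussian_exp_moment_two_sided_general (d : ℕ)
    (μ : EuclideanSpace ℝ (Fin d)) (H : Matrix (Fin d) (Fin d) ℝ) :
    ∃ C > (0 : ℝ), ∃ τ₀ > (0 : ℝ), ∀ τ : ℝ, 0 < τ → τ < τ₀ →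
      Real.exp ((μ : Fin d → ℝ) ⬝ᵥ H.mulVec (μ : Fin d → ℝ)) ≤
        (∫ p, Real.exp ((p.1 : Fin d → ℝ) ⬝ᵥ H.mulVec (p.2 : Fin d → ℝ))
          ∂((gaussianPi d μ τ).prod (gaussianPi d μ τ))) ∧
      (∫ p, Real.exp ((p.1 : Fin d → ℝ) ⬝ᵥ H.mulVec (p.2 : Fin d → ℝ))
          ∂((gaussianPi d μ τ).prod (gaussianPi d μ τ))) ≤
        (1 + C * τ ^ 2) * Real.exp ((μ : Fin d → ℝ) ⬝ᵥ H.mulVec (μ : Fin d → ℝ)) := by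
  obtain ⟨C, hC, hbound⟩ :=
    exists_pos_eventually_integral_exp_dotProduct_mulVec_le (μ : Fin d → ℝ) H
  obtain ⟨δ, hδ, hsub⟩ := mem_nhdsGT_iff_exists_Ioo_subset.1 hbound
  refine ⟨C, hC, √δ, sqrt_pos.2 hδ, fun τ hτ hτδ ↦ ?_⟩
  rw [integral_prod_gaussianPi d μ τ fun p ↦ Real.exp (p.1 ⬝ᵥ H *ᵥ p.2)]
  exact hsub ⟨by positivity, (lt_sqrt hτ.le).1 hτδ⟩

/-- For a symmetric matrix `H` there exist `C > 0` and `τ₀ > 0` such that for all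
`τ ∈ (0, τ₀)`, with `z₁, z₂` independent `N(μ, τ² I_d)` (modeled by the product measure):
`exp(μᵀHμ) ≤ E[exp(⟨z₁, H z₂⟩)] ≤ (1 + Cτ²) exp(μᵀHμ)`. -/
theorem bilinear_gaussian_exp_moment_two_sided (d : ℕ) (hd : 1 ≤ d)
    (μ : EuclideanSpace ℝ (Fin d)) (H : Matrix (Fin d) (Fin d) ℝ) (hH : H.IsSymm) :
    ∃ C > (0 : ℝ), ∃ τ₀ > (0 : ℝ), ∀ τ : ℝ, 0 < τ → τ < τ₀ →
      Real.exp ((μ : Fin d → ℝ) ⬝ᵥ H.mulVec (μ : Fin d → ℝ)) ≤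
        (∫ p, Real.exp ((p.1 : Fin d → ℝ) ⬝ᵥ H.mulVec (p.2 : Fin d → ℝ))
          ∂((gaussianPi d μ τ).prod (gaussianPi d μ τ))) ∧
      (∫ p, Real.exp ((p.1 : Fin d → ℝ) ⬝ᵥ H.mulVec (p.2 : Fin d → ℝ))
          ∂((gaussianPi d μ τ).prod (gaussianPi d μ τ))) ≤
        (1 + C * τ ^ 2) * Real.exp ((μ : Fin d → ℝ) ⬝ᵥ H.mulVec (μ : Fin d → ℝ)) :=
  bilinear_gaussian_exp_moment_two_sided_general d μ H
end

section
/- Let A, B, P̂ be real n×n matrices with rank(B) ≤ 2, rank(P̂) ≤ 2, and ‖P̂ − A‖_F ≤ ‖B − A‖_F. Then ‖P̂ − B‖_F ≤ (8/√3) ‖A − B‖₂. -/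
/-!
Write `M = P̂ - B` and `D = A - B`. Expanding `‖P̂ - A‖_F² = ‖M - D‖_F² ≤ ‖D‖_F²` gives
`‖M‖_F² ≤ 2 ⟨M, D⟩_F`. The columns of `M` lie in the span `U` of the columns of `P̂` and `B`,
of dimension `r ≤ 4`; expanding them in an orthonormal basis `(u_k)` of `U` and applying
Cauchy–Schwarz gives `⟨M, D⟩_F² ≤ ‖M‖_F² · ∑_k ‖Dᵀ u_k‖² ≤ ‖M‖_F² · r ‖D‖₂²`. Hence
`‖M‖_F ≤ 2 √r ‖D‖₂ ≤ 4 ‖D‖₂ ≤ (8/√3) ‖D‖₂`.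
-/

open Matrix

/-- The operator (spectral) norm of a real matrix, i.e. the operator norm of the induced
continuous linear map on Euclidean space. -/
noncomputable def specNorm {n : ℕ} (M : Matrix (Fin n) (Fin n) ℝ) : ℝ :=
  ‖Matrix.toEuclideanCLM (𝕜 := ℝ) M‖

/-- The Frobenius norm of a real matrix. -/
noncomputable def frobNorm {n : ℕ} (M : Matrix (Fin n) (Fin n) ℝ) : ℝ :=
  Real.sqrt (∑ i, ∑ j, (M i j) ^ 2)

open Finset Module Submodule
open scoped RealInnerProductSpace

section InnerProductSpace

variable {E ι : Type*} [NormedAddCommGroup E] [InnerProductSpace ℝ E] [Fintype ι]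

theorem sum_norm_sub_sq_le_two_mul_sum_inner {p a b : ι → E}
    (h : ∑ j, ‖p j - a j‖ ^ 2 ≤ ∑ j, ‖b j - a j‖ ^ 2) :
    ∑ j, ‖p j - b j‖ ^ 2 ≤ 2 * ∑ j, ⟪p j - b j, a j - b j⟫ := by
  have expand : ∀ j, ‖p j - a j‖ ^ 2 =
      ‖p j - b j‖ ^ 2 - 2 * ⟪p j - b j, a j - b j⟫ + ‖b j - a j‖ ^ 2 := fun j => by
    rw [show p j - a j = (p j - b j) - (a j - b j) by abel, norm_sub_sq_real, norm_sub_rev (b j)]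
  simp only [expand, sum_add_distrib, sum_sub_distrib, ← mul_sum] at h
  linarith

theorem inner_eq_sum_inner_mul_inner_of_mem {U : Submodule ℝ E} {κ : Type*} [Fintype κ]
    (b : OrthonormalBasis κ ℝ U) {x : E} (hx : x ∈ U) (y : E) :
    ⟪x, y⟫ = ∑ k, ⟪x, (b k : E)⟫ * ⟪(b k : E), y⟫ := by
  have hsum : ∑ k, ⟪x, (b k : E)⟫ • (b k : E) = x := by
    simpa [real_inner_comm] using congrArg Subtype.val (b.sum_repr' ⟨x, hx⟩)
  conv_lhs => rw [← hsum]
  simp only [sum_inner, real_inner_smul_left]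

theorem sq_sum_inner_le_sum_norm_sq_mul_finrank (U : Submodule ℝ E) [FiniteDimensional ℝ U]
    {x : ι → E} (hx : ∀ j, x j ∈ U) (y : ι → E) {c : ℝ}
    (hy : ∀ u ∈ U, ∑ j, ⟪u, y j⟫ ^ 2 ≤ c ^ 2 * ‖u‖ ^ 2) :
    (∑ j, ⟪x j, y j⟫) ^ 2 ≤ (∑ j, ‖x j‖ ^ 2) * (finrank ℝ U * c ^ 2) := by
  let b := stdOrthonormalBasis ℝ U
  have hx_parseval : ∀ j, ∑ k, ⟪x j, (b k : E)⟫ ^ 2 = ‖x j‖ ^ 2 := fun j =>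
    b.sum_sq_inner_left ⟨x j, hx j⟩
  have hy_basis : ∀ k, ∑ j, ⟪(b k : E), y j⟫ ^ 2 ≤ c ^ 2 := fun k => by
    simpa [show ‖(b k : E)‖ = 1 from b.orthonormal.1 k] using hy _ (b k).2
  calc (∑ j, ⟪x j, y j⟫) ^ 2
      = (∑ jk : ι × _, ⟪x jk.1, (b jk.2 : E)⟫ * ⟪(b jk.2 : E), y jk.1⟫) ^ 2 := by
        simp_rw [Fintype.sum_prod_type, ← inner_eq_sum_inner_mul_inner_of_mem b (hx _)]
    _ ≤ (∑ jk : ι × _, ⟪x jk.1, (b jk.2 : E)⟫ ^ 2) * ∑ jk : ι × _, ⟪(b jk.2 : E), y jk.1⟫ ^ 2 :=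
        sum_mul_sq_le_sq_mul_sq _ _ _
    _ = (∑ j, ‖x j‖ ^ 2) * ∑ k, ∑ j, ⟪(b k : E), y j⟫ ^ 2 := by
        rw [Fintype.sum_prod_type, Fintype.sum_prod_type_right]
        dsimp only
        rw [sum_congr rfl fun j _ => hx_parseval j]
    _ ≤ (∑ j, ‖x j‖ ^ 2) * (finrank ℝ U * c ^ 2) := by
        gcongr
        exact (sum_le_sum fun k _ => hy_basis k).trans_eq (by simp)

theorem sum_norm_sub_sq_le_four_mul_finrank (U : Submodule ℝ E) [FiniteDimensional ℝ U]
    {p a b : ι → E} (hpb : ∀ j, p j - b j ∈ U) {c : ℝ}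
    (hab : ∀ u ∈ U, ∑ j, ⟪u, a j - b j⟫ ^ 2 ≤ c ^ 2 * ‖u‖ ^ 2)
    (h : ∑ j, ‖p j - a j‖ ^ 2 ≤ ∑ j, ‖b j - a j‖ ^ 2) :
    ∑ j, ‖p j - b j‖ ^ 2 ≤ 4 * finrank ℝ U * c ^ 2 := by
  set S := ∑ j, ‖p j - b j‖ ^ 2
  have hS : 0 ≤ S := by positivity
  have hS_le := sum_norm_sub_sq_le_two_mul_sum_inner h
  have hinner_sq := sq_sum_inner_le_sum_norm_sq_mul_finrank U hpb _ hab
  rcases hS.eq_or_lt with hS0 | hSpos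
  · rw [← hS0]; positivity
  -- `S² ≤ (2 ∑ ⟪p - b, a - b⟫)² ≤ 4 S r c²`
  · refine le_of_mul_le_mul_left ?_ hSpos
    nlinarith [pow_le_pow_left₀ hS hS_le 2]

end InnerProductSpace

section Matrix

variable {m n : Type*}

def euclideanCol (M : Matrix m n ℝ) (j : n) : EuclideanSpace ℝ m :=
  WithLp.toLp 2 (M.col j)

theorem euclideanCol_sub (M N : Matrix m n ℝ) (j : n) :
    euclideanCol (M - N) j = euclideanCol M j - euclideanCol N j :=
  rfl

theorem finrank_span_range_euclideanCol [Fintype n] (M : Matrix m n ℝ) :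
    finrank ℝ (span ℝ (Set.range (euclideanCol M))) = M.rank := by
  rw [rank_eq_finrank_span_cols,
    ← LinearEquiv.finrank_map_eq (WithLp.linearEquiv 2 ℝ (m → ℝ)).symm, map_span, ← Set.range_comp]
  rfl

end Matrix

section SquareMatrix

variable {n : ℕ}

lemma specNorm_nonneg (M : Matrix (Fin n) (Fin n) ℝ) : 0 ≤ specNorm M :=
  norm_nonneg _

lemma frobNorm_nonneg (M : Matrix (Fin n) (Fin n) ℝ) : 0 ≤ frobNorm M :=
  Real.sqrt_nonneg _

theorem frobNorm_sq_eq_sum_norm_sq_euclideanCol (M : Matrix (Fin n) (Fin n) ℝ) :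
    frobNorm M ^ 2 = ∑ j, ‖euclideanCol M j‖ ^ 2 := by
  rw [frobNorm, Real.sq_sqrt (by positivity), sum_comm]
  simp [EuclideanSpace.real_norm_sq_eq, euclideanCol, col_apply]

theorem specNorm_transpose (M : Matrix (Fin n) (Fin n) ℝ) : specNorm Mᵀ = specNorm M := by
  rw [specNorm, specNorm, ← conjTranspose_eq_transpose_of_trivial, ← star_eq_conjTranspose,
    map_star, ContinuousLinearMap.star_eq_adjoint, LinearIsometryEquiv.norm_map]

theorem sum_sq_inner_euclideanCol_le (M : Matrix (Fin n) (Fin n) ℝ)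
    (u : EuclideanSpace ℝ (Fin n)) :
    ∑ j, ⟪u, euclideanCol M j⟫ ^ 2 ≤ specNorm M ^ 2 * ‖u‖ ^ 2 := by
  have hcol : ∀ j, ⟪u, euclideanCol M j⟫ = toEuclideanCLM (𝕜 := ℝ) Mᵀ u j := fun j => by
    simp [euclideanCol, PiLp.inner_apply, mulVec, dotProduct, col_apply]
  rw [← mul_pow, ← specNorm_transpose, specNorm]
  simpa [hcol, EuclideanSpace.real_norm_sq_eq] using
    pow_le_pow_left₀ (norm_nonneg _) ((toEuclideanCLM (𝕜 := ℝ) Mᵀ).le_opNorm u) 2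

end SquareMatrix

/-- If `rank B ≤ 2`, `rank P̂ ≤ 2` and `‖P̂ − A‖_F ≤ ‖B − A‖_F`, then
`‖P̂ − B‖_F ≤ (8/√3)‖A − B‖₂`. -/
theorem frobenius_error_bound_of_low_rank_projection (n : ℕ)
    (A B Phat : Matrix (Fin n) (Fin n) ℝ) (hBrank : B.rank ≤ 2) (hPrank : Phat.rank ≤ 2)
    (hproj : frobNorm (Phat - A) ≤ frobNorm (B - A)) :
    frobNorm (Phat - B) ≤ (8 / Real.sqrt 3) * specNorm (A - B) := by
  let U := span ℝ (Set.range (euclideanCol Phat)) ⊔ span ℝ (Set.range (euclideanCol B))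
  have hU : finrank ℝ U ≤ 4 := by
    refine (finrank_add_le_finrank_add_finrank _ _).trans ?_
    rw [finrank_span_range_euclideanCol, finrank_span_range_euclideanCol]
    omega
  have hmem : ∀ j, euclideanCol Phat j - euclideanCol B j ∈ U := fun j =>
    sub_mem (mem_sup_left (subset_span ⟨j, rfl⟩)) (mem_sup_right (subset_span ⟨j, rfl⟩))
  have hcols := pow_le_pow_left₀ (frobNorm_nonneg _) hproj 2
  simp only [frobNorm_sq_eq_sum_norm_sq_euclideanCol, euclideanCol_sub] at hcols
  have hsum := sum_norm_sub_sq_le_four_mul_finrank U hmem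
    (fun u _ => by simpa only [euclideanCol_sub] using sum_sq_inner_euclideanCol_le (A - B) u) hcols
  have hfour : frobNorm (Phat - B) ≤ 4 * specNorm (A - B) := by
    rw [← pow_le_pow_iff_left₀ (frobNorm_nonneg _) (mul_nonneg zero_le_four (specNorm_nonneg _))
      two_ne_zero, frobNorm_sq_eq_sum_norm_sq_euclideanCol]
    simp only [euclideanCol_sub]
    calc _ ≤ 4 * finrank ℝ U * specNorm (A - B) ^ 2 := hsum
      _ ≤ 4 * 4 * specNorm (A - B) ^ 2 := by gcongr; exact_mod_cast hU
      _ = (4 * specNorm (A - B)) ^ 2 := by ring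
  have hsqrt3 : (4 : ℝ) ≤ 8 / Real.sqrt 3 := by
    rw [le_div_iff₀ (by positivity)]
    nlinarith [Real.sq_sqrt (show (0 : ℝ) ≤ 3 by norm_num), Real.sqrt_nonneg 3]
  exact hfour.trans (mul_le_mul_of_nonneg_right hsqrt3 (specNorm_nonneg _))
end

section
/- Let n₁, n₂ ≥ 1 and n = n₁ + n₂, with community labels σ_i = 1 for 1 ≤ i ≤ n₁ and σ_i = 2 for n₁ < i ≤ n. Let α ∈ ℝ^n and 0 < ξ₋ < ξ₊. Define the n×n matrix B by B_{ij} = e^{α_i+α_j} ξ₊ if σ_i = σ_j and B_{ij} = e^{α_i+α_j} ξ₋ otherwise, set L_u = Σ_{i: σ_i = u} e^{α_i} for u = 1, 2, and let B̄_i = B_i / ‖B_i‖₁ be the ℓ¹-normalized i-th row of B. Suppose there are constants ω̲ ∈ ℝ and L̄ > 0 such that min(L₁, L₂) ≥ (n/3) e^{−ω̲} and L₁ + L₂ ≤ n L̄. Then for all i, j with σ_i ≠ σ_j, ‖B̄_i − B̄_j‖₁ ≥ (ξ₊ − ξ₋) / (3 e^{ω̲} L̄ ξ₊). -/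
/-!
Row `i` of `B` is `e^{α_i}` times a vector that depends only on the community of `i` and is a
multiple of `(e^{α_k})_k` on each block, so the normalized rows are two fixed block vectors.
With `S₁ = ξ₊L₁ + ξ₋L₂` and `S₂ = ξ₋L₁ + ξ₊L₂` their ℓ¹ distance is
`2 (ξ₊² − ξ₋²) L₁ L₂ / (S₁ S₂)`, which is bounded below using `S₁, S₂ ≤ ξ₊ (L₁ + L₂)` and
`2 L₁ L₂ ≥ min(L₁, L₂) (L₁ + L₂)`.
-/

def l1norm {n : ℕ} (x : Fin n → ℝ) : ℝ := ∑ k, |x k|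

open Finset Real

section TwoBlock

variable {n : ℕ}

lemma l1norm_smul (c : ℝ) (x : Fin n → ℝ) : l1norm (c • x) = |c| * l1norm x := by
  simp [l1norm, abs_mul, mul_sum]

lemma l1norm_sub_comm (x y : Fin n → ℝ) : l1norm (x - y) = l1norm (y - x) := by
  simp only [l1norm, Pi.sub_apply, abs_sub_comm]

lemma inv_l1norm_smul_smul_of_pos {c : ℝ} (hc : 0 < c) (x : Fin n → ℝ) :
    (l1norm (c • x))⁻¹ • (c • x) = (l1norm x)⁻¹ • x := by
  rw [l1norm_smul, abs_of_pos hc, smul_smul, mul_inv_rev, inv_mul_cancel_right₀ hc.ne']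

variable (w : Fin n → ℝ) (p : Fin n → Prop) [DecidablePred p]

def twoBlockVec (a b : ℝ) : Fin n → ℝ := fun k => w k * if p k then a else b

lemma twoBlockVec_sub (a b a' b' : ℝ) :
    twoBlockVec w p a b - twoBlockVec w p a' b' = twoBlockVec w p (a - a') (b - b') := by
  ext k
  simp only [twoBlockVec, Pi.sub_apply]
  split_ifs <;> ring

lemma smul_twoBlockVec (c a b : ℝ) :
    c • twoBlockVec w p a b = twoBlockVec w p (c * a) (c * b) := by
  ext k
  simp only [twoBlockVec, Pi.smul_apply, smul_eq_mul]
  split_ifs <;> ring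

variable {w} in
lemma l1norm_twoBlockVec (hw : ∀ k, 0 ≤ w k) (a b : ℝ) :
    l1norm (twoBlockVec w p a b) =
      |a| * ∑ k ∈ univ.filter p, w k + |b| * ∑ k ∈ univ.filter (fun k => ¬ p k), w k := by
  simp only [l1norm, twoBlockVec, abs_mul, abs_of_nonneg (hw _), apply_ite abs, mul_ite,
    sum_ite, ← sum_mul]
  ring

variable {w} in
lemma inv_l1norm_smul_twoBlockVec (hw : ∀ k, 0 ≤ w k) {a b : ℝ} (ha : 0 ≤ a) (hb : 0 ≤ b) :
    (l1norm (twoBlockVec w p a b))⁻¹ • twoBlockVec w p a b =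
      twoBlockVec w p
        (a / (a * ∑ k ∈ univ.filter p, w k + b * ∑ k ∈ univ.filter (fun k => ¬ p k), w k))
        (b / (a * ∑ k ∈ univ.filter p, w k + b * ∑ k ∈ univ.filter (fun k => ¬ p k), w k)) := by
  rw [l1norm_twoBlockVec p hw, abs_of_nonneg ha, abs_of_nonneg hb, smul_twoBlockVec,
    inv_mul_eq_div, inv_mul_eq_div]

end TwoBlock

section Rows

variable {n : ℕ} {w : Fin n → ℝ} (p : Fin n → Prop) [DecidablePred p] {ξm ξp : ℝ}
  {B : Matrix (Fin n) (Fin n) ℝ}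

lemma row_eq_smul_twoBlockVec (hB : ∀ i k, B i k = w i * w k * if (p i ↔ p k) then ξp else ξm)
    (i : Fin n) :
    B i = w i • twoBlockVec w p (if p i then ξp else ξm) (if p i then ξm else ξp) := by
  ext k
  simp only [hB, twoBlockVec, Pi.smul_apply, smul_eq_mul]
  by_cases hi : p i <;> by_cases hk : p k <;> simp [hi, hk, mul_assoc]

lemma l1norm_sub_normalized_rows (hw : ∀ k, 0 < w k)
    (hB : ∀ i k, B i k = w i * w k * if (p i ↔ p k) then ξp else ξm)
    (hξm : 0 ≤ ξm) (hξp : 0 ≤ ξp) {L₁ L₂ : ℝ} (hL₁ : ∑ k ∈ univ.filter p, w k = L₁)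
    (hL₂ : ∑ k ∈ univ.filter (fun k => ¬ p k), w k = L₂) {i j : Fin n} (hi : p i) (hj : ¬ p j) :
    l1norm ((l1norm (B i))⁻¹ • B i - (l1norm (B j))⁻¹ • B j) =
      |ξp / (ξp * L₁ + ξm * L₂) - ξm / (ξm * L₁ + ξp * L₂)| * L₁ +
        |ξm / (ξp * L₁ + ξm * L₂) - ξp / (ξm * L₁ + ξp * L₂)| * L₂ := by
  have hw₀ : ∀ k, 0 ≤ w k := fun k => (hw k).le
  rw [row_eq_smul_twoBlockVec p hB, row_eq_smul_twoBlockVec p hB, if_pos hi, if_pos hi,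
    if_neg hj, if_neg hj, inv_l1norm_smul_smul_of_pos (hw i), inv_l1norm_smul_smul_of_pos (hw j),
    inv_l1norm_smul_twoBlockVec p hw₀ hξp hξm, inv_l1norm_smul_twoBlockVec p hw₀ hξm hξp,
    twoBlockVec_sub, l1norm_twoBlockVec p hw₀, hL₁, hL₂]

end Rows

lemma two_block_gap {L₁ L₂ ξm ξp : ℝ} (hL₁ : 0 < L₁) (hL₂ : 0 < L₂) (hξm : 0 ≤ ξm)
    (hξ : ξm < ξp) :
    (ξp - ξm) / ξp * (min L₁ L₂ / (L₁ + L₂)) ≤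
      |ξp / (ξp * L₁ + ξm * L₂) - ξm / (ξm * L₁ + ξp * L₂)| * L₁ +
        |ξm / (ξp * L₁ + ξm * L₂) - ξp / (ξm * L₁ + ξp * L₂)| * L₂ := by
  have hξp : 0 < ξp := hξm.trans_lt hξ
  set S₁ := ξp * L₁ + ξm * L₂ with hS₁
  set S₂ := ξm * L₁ + ξp * L₂ with hS₂
  have hS₁pos : 0 < S₁ := by positivity
  have hS₂pos : 0 < S₂ := by positivity
  have hD : 0 ≤ ξp ^ 2 - ξm ^ 2 := by nlinarith
  have h₁ : ξp / S₁ - ξm / S₂ = (ξp ^ 2 - ξm ^ 2) * L₂ / (S₁ * S₂) := by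
    field_simp
    ring
  have h₂ : ξm / S₁ - ξp / S₂ = -((ξp ^ 2 - ξm ^ 2) * L₁ / (S₁ * S₂)) := by
    field_simp
    ring
  have hmin : min L₁ L₂ * (L₁ + L₂) ≤ 2 * (L₁ * L₂) := by
    rcases le_total L₁ L₂ with h | h
    · rw [min_eq_left h]; nlinarith
    · rw [min_eq_right h]; nlinarith
  have hS : S₁ * S₂ ≤ (ξp * (L₁ + L₂)) ^ 2 := by
    rw [sq]
    gcongr <;> nlinarith
  rw [h₁, h₂, abs_neg, abs_of_nonneg (by positivity), abs_of_nonneg (by positivity)]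
  calc (ξp - ξm) / ξp * (min L₁ L₂ / (L₁ + L₂))
      = (ξp - ξm) * ξp * (min L₁ L₂ * (L₁ + L₂)) / (ξp * (L₁ + L₂)) ^ 2 := by
        field_simp
    _ ≤ (ξp ^ 2 - ξm ^ 2) * (2 * (L₁ * L₂)) / (S₁ * S₂) := by
        gcongr ?_ * ?_ / ?_
        nlinarith
    _ = _ := by ring

lemma inv_three_mul_exp_mul_le_div {N ω Lbar m S : ℝ} (hN : 0 < N) (hm : N / 3 * exp (-ω) ≤ m)
    (hS : 0 < S) (hSN : S ≤ N * Lbar) : (3 * exp ω * Lbar)⁻¹ ≤ m / S := by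
  have hLbar : 0 < Lbar := pos_of_mul_pos_right (hS.trans_le hSN) hN.le
  calc (3 * exp ω * Lbar)⁻¹ = N / 3 * exp (-ω) / (N * Lbar) := by
        rw [exp_neg]
        field_simp
    _ ≤ N / 3 * exp (-ω) / S := div_le_div_of_nonneg_left (by positivity) hS hSN
    _ ≤ m / S := by gcongr

theorem normalized_row_separation_general (n₁ n₂ : ℕ)
    (α : Fin (n₁ + n₂) → ℝ) (ξm ξp : ℝ) (hξm : 0 < ξm) (hξ : ξm < ξp)
    (B : Matrix (Fin (n₁ + n₂)) (Fin (n₁ + n₂)) ℝ)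
    (hB : ∀ i j, B i j = Real.exp (α i + α j) *
      (if (((i : ℕ) < n₁) ↔ ((j : ℕ) < n₁)) then ξp else ξm))
    (L₁ L₂ : ℝ)
    (hL₁ : L₁ = ∑ i ∈ Finset.univ.filter (fun i : Fin (n₁ + n₂) => (i : ℕ) < n₁),
      Real.exp (α i))
    (hL₂ : L₂ = ∑ i ∈ Finset.univ.filter (fun i : Fin (n₁ + n₂) => ¬ (i : ℕ) < n₁),
      Real.exp (α i))
    (ω : ℝ) (Lbar : ℝ)
    (hmin : ((n₁ + n₂ : ℕ) : ℝ) / 3 * Real.exp (-ω) ≤ min L₁ L₂)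
    (hsum : L₁ + L₂ ≤ ((n₁ + n₂ : ℕ) : ℝ) * Lbar)
    (i j : Fin (n₁ + n₂)) (hij : ¬ (((i : ℕ) < n₁) ↔ ((j : ℕ) < n₁))) :
    (ξp - ξm) / (3 * Real.exp ω * Lbar * ξp) ≤
      l1norm ((l1norm (B i))⁻¹ • B i - (l1norm (B j))⁻¹ • B j) := by
  wlog hi : (i : ℕ) < n₁ generalizing i j
  · rw [l1norm_sub_comm]
    exact this j i (fun h => hij h.symm) (by tauto)
  have hj : ¬ (j : ℕ) < n₁ := fun hj => hij (iff_of_true hi hj)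
  have hB' : ∀ i k, B i k = exp (α i) * exp (α k) *
      if (((i : ℕ) < n₁) ↔ ((k : ℕ) < n₁)) then ξp else ξm := fun i k => by rw [hB, exp_add]
  have hL₁pos : 0 < L₁ :=
    hL₁ ▸ sum_pos (fun k _ => exp_pos _) ⟨i, mem_filter.2 ⟨mem_univ _, hi⟩⟩
  have hL₂pos : 0 < L₂ :=
    hL₂ ▸ sum_pos (fun k _ => exp_pos _) ⟨j, mem_filter.2 ⟨mem_univ _, hj⟩⟩
  rw [l1norm_sub_normalized_rows _ (fun k => exp_pos (α k)) hB' hξm.le (hξm.trans hξ).le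
    hL₁.symm hL₂.symm hi hj]
  calc (ξp - ξm) / (3 * exp ω * Lbar * ξp) = (ξp - ξm) / ξp * (3 * exp ω * Lbar)⁻¹ := by ring
    _ ≤ (ξp - ξm) / ξp * (min L₁ L₂ / (L₁ + L₂)) := by
        gcongr
        · exact div_nonneg (sub_nonneg.2 hξ.le) (hξm.trans hξ).le
        · exact inv_three_mul_exp_mul_le_div (Nat.cast_pos.2 i.pos) hmin (by positivity) hsum
    _ ≤ _ := two_block_gap hL₁pos hL₂pos hξm.le hξ

/-- Separation of the ℓ¹-normalized rows of the two-block matrix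
`B_{ij} = e^{α_i+α_j} ξ₊` (same community) / `e^{α_i+α_j} ξ₋` (different communities):
under `min(L₁, L₂) ≥ (n/3)e^{−ω̲}` and `L₁ + L₂ ≤ n L̄`, for `i, j` in different communities,
`‖B̄_i − B̄_j‖₁ ≥ (ξ₊ − ξ₋)/(3 e^{ω̲} L̄ ξ₊)`. -/
theorem normalized_row_separation (n₁ n₂ : ℕ) (h₁ : 1 ≤ n₁) (h₂ : 1 ≤ n₂)
    (α : Fin (n₁ + n₂) → ℝ) (ξm ξp : ℝ) (hξm : 0 < ξm) (hξ : ξm < ξp)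
    (B : Matrix (Fin (n₁ + n₂)) (Fin (n₁ + n₂)) ℝ)
    (hB : ∀ i j, B i j = Real.exp (α i + α j) *
      (if (((i : ℕ) < n₁) ↔ ((j : ℕ) < n₁)) then ξp else ξm))
    (L₁ L₂ : ℝ)
    (hL₁ : L₁ = ∑ i ∈ Finset.univ.filter (fun i : Fin (n₁ + n₂) => (i : ℕ) < n₁),
      Real.exp (α i))
    (hL₂ : L₂ = ∑ i ∈ Finset.univ.filter (fun i : Fin (n₁ + n₂) => ¬ (i : ℕ) < n₁),
      Real.exp (α i))
    (ω : ℝ) (Lbar : ℝ) (hLbar : 0 < Lbar)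
    (hmin : ((n₁ + n₂ : ℕ) : ℝ) / 3 * Real.exp (-ω) ≤ min L₁ L₂)
    (hsum : L₁ + L₂ ≤ ((n₁ + n₂ : ℕ) : ℝ) * Lbar)
    (i j : Fin (n₁ + n₂)) (hij : ¬ (((i : ℕ) < n₁) ↔ ((j : ℕ) < n₁))) :
    (ξp - ξm) / (3 * Real.exp ω * Lbar * ξp) ≤
      l1norm ((l1norm (B i))⁻¹ • B i - (l1norm (B j))⁻¹ • B j) :=
  normalized_row_separation_general n₁ n₂ α ξm ξp hξm hξ B hB L₁ L₂ hL₁ hL₂ ω Lbar hmin hsum i j hij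
end

section
/- Let d ≥ 1, μ ∈ ℝ^d, τ > 0, η > 0, and let z ~ N(μ, τ² I_d). If (η/τ)² ≥ d + 2√(d · η²/(4τ²)) + η²/(2τ²), then P(‖z − μ‖₂ > η) ≤ exp(−η²/(4τ²)). -/
/-!
Chernoff bound for `‖z - μ‖²`. For `2 t τ² < 1` each coordinate contributes
`E exp (t (z i - μ i)²) = (1 - 2 t τ²)^(-1/2)`, so Markov's inequality gives
`P(‖z - μ‖ > η) ≤ (1 - 2 t τ²)^(-d/2) exp (-t η²)`. Choosing `1 - 2 t τ² = 1 / r` with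
`r = η² / (d τ²)` turns this into `exp (d/2 (log r - r + 1))`. The hypothesis reads
`2 + 2 √r ≤ r`, which forces `r ≥ 6`, and there `log r ≤ r / 2 - 1`, leaving
`exp (-d r / 4) = exp (-η² / (4 τ²))`.
-/

open MeasureTheory ProbabilityTheory Real

open scoped ENNReal NNReal

lemma Real.log_le_half_sub_one {r : ℝ} (hr : 6 ≤ r) : log r ≤ r / 2 - 1 := by
  have h4 : log (r / 4) ≤ r / 4 - 1 := log_le_sub_one_of_pos (by positivity)
  have hlog4 : log 4 = 2 * log 2 := by
    rw [show (4 : ℝ) = 2 ^ 2 by norm_num, log_pow]; norm_num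
  rw [log_div (by positivity) (by norm_num), hlog4] at h4
  linarith [log_two_lt_d9]

lemma six_le_of_two_add_two_sqrt_le {r : ℝ} (h : 2 + 2 * √r ≤ r) : 6 ≤ r := by
  have hs := sqrt_nonneg r
  have hsq : √r ^ 2 = r := sq_sqrt (by linarith)
  nlinarith

lemma lintegral_pi_prod_eq_prod {ι : Type*} [Fintype ι] {Ω : ι → Type*}
    [∀ i, MeasurableSpace (Ω i)] (μ : ∀ i, Measure (Ω i)) [∀ i, IsProbabilityMeasure (μ i)]
    {f : ∀ i, Ω i → ℝ≥0∞} (hf : ∀ i, Measurable (f i)) :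
    ∫⁻ x, ∏ i, f i (x i) ∂Measure.pi μ = ∏ i, ∫⁻ x, f i x ∂μ i := by
  rw [lintegral_prod_eq_prod_lintegral_of_indepFun _ _
    (iIndepFun_pi fun i => (hf i).aemeasurable) fun i => (hf i).comp (measurable_pi_apply i)]
  exact Finset.prod_congr rfl fun i _ => (measurePreserving_eval μ i).lintegral_comp (hf i)

lemma lintegral_exp_mul_sq_sub_gaussianReal (m : ℝ) {v : ℝ≥0} (hv : v ≠ 0) {t : ℝ}
    (ht : 2 * t * v < 1) :
    ∫⁻ x, ENNReal.ofReal (exp (t * (x - m) ^ 2)) ∂gaussianReal m v =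
      ENNReal.ofReal (√(1 - 2 * t * v))⁻¹ := by
  have hv0 : (0 : ℝ) < v := by positivity
  set c : ℝ := (1 - 2 * t * v) / (2 * v)
  have hc : 0 < c := div_pos (by linarith) (by positivity)
  -- the Gaussian density times the integrand is again a Gaussian, of exponent `-c (x - m)²`
  have hdensity (x : ℝ) : gaussianPDF m v x * ENNReal.ofReal (exp (t * (x - m) ^ 2)) =
      ENNReal.ofReal ((√(2 * π * v))⁻¹ * exp (-c * (x - m) ^ 2)) := by
    rw [gaussianPDF, gaussianPDFReal, ← ENNReal.ofReal_mul (by positivity), mul_assoc,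
      ← exp_add]
    congr 3
    simp only [c]
    field_simp
    ring
  rw [gaussianReal_of_var_ne_zero m hv, lintegral_withDensity_eq_lintegral_mul₀
    (measurable_gaussianPDF m v).aemeasurable (by fun_prop)]
  simp only [Pi.mul_apply, hdensity]
  rw [← ofReal_integral_eq_lintegral_ofReal
    (((integrable_exp_neg_mul_sq hc).comp_sub_right m).const_mul _)
    (Filter.Eventually.of_forall fun x => by positivity),
    integral_const_mul, integral_sub_right_eq_self (fun x => exp (-c * x ^ 2)) m,
    integral_gaussian, ← sqrt_inv, ← sqrt_inv, ← sqrt_mul (by positivity)]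
  congr 2
  simp only [c]
  field_simp

lemma lintegral_exp_mul_norm_sub_sq_gaussianPi (d : ℕ) (μ : EuclideanSpace ℝ (Fin d)) {τ t : ℝ}
    (hτ : τ ≠ 0) (ht : 2 * t * τ ^ 2 < 1) :
    ∫⁻ z, ENNReal.ofReal (exp (t * ‖z - μ‖ ^ 2)) ∂gaussianPi d μ τ =
      ENNReal.ofReal ((√(1 - 2 * t * τ ^ 2))⁻¹ ^ d) := by
  have hv : (τ ^ 2).toNNReal ≠ 0 := (toNNReal_pos.2 (by positivity)).ne'
  have hcoe : ((τ ^ 2).toNNReal : ℝ) = τ ^ 2 := coe_toNNReal _ (sq_nonneg τ)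
  have hprod (x : Fin d → ℝ) :
      ENNReal.ofReal (exp (t * ‖MeasurableEquiv.toLp 2 (Fin d → ℝ) x - μ‖ ^ 2)) =
        ∏ i, ENNReal.ofReal (exp (t * (x i - μ i) ^ 2)) := by
    rw [EuclideanSpace.norm_sq_eq, Finset.mul_sum, exp_sum,
      ENNReal.ofReal_prod_of_nonneg fun i _ => (exp_pos _).le]
    simp [Real.norm_eq_abs, sq_abs]
  rw [gaussianPi, lintegral_map (by fun_prop) (MeasurableEquiv.measurable _)]
  simp only [hprod]
  rw [lintegral_pi_prod_eq_prod (f := fun i y => ENNReal.ofReal (exp (t * (y - μ i) ^ 2))) _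
    fun i => by fun_prop]
  simp only [lintegral_exp_mul_sq_sub_gaussianReal _ hv (hcoe ▸ ht), hcoe]
  rw [Finset.prod_const, Finset.card_univ, Fintype.card_fin, ENNReal.ofReal_pow (by positivity)]

lemma gaussianPi_norm_sub_gt_le (d : ℕ) (μ : EuclideanSpace ℝ (Fin d)) {τ t η : ℝ}
    (hτ : τ ≠ 0) (ht₀ : 0 ≤ t) (ht : 2 * t * τ ^ 2 < 1) (hη : 0 ≤ η) :
    gaussianPi d μ τ {z | η < ‖z - μ‖} ≤
      ENNReal.ofReal ((√(1 - 2 * t * τ ^ 2))⁻¹ ^ d * exp (-(t * η ^ 2))) := by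
  have hsub : {z | η < ‖z - μ‖} ⊆
      {z | ENNReal.ofReal (exp (t * η ^ 2)) ≤ ENNReal.ofReal (exp (t * ‖z - μ‖ ^ 2))} :=
    fun z hz => ENNReal.ofReal_le_ofReal <| exp_le_exp.2 <|
      mul_le_mul_of_nonneg_left (pow_le_pow_left₀ hη (le_of_lt hz) 2) ht₀
  calc gaussianPi d μ τ {z | η < ‖z - μ‖}
      ≤ (∫⁻ z, ENNReal.ofReal (exp (t * ‖z - μ‖ ^ 2)) ∂gaussianPi d μ τ) /
          ENNReal.ofReal (exp (t * η ^ 2)) :=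
        (measure_mono hsub).trans <| meas_ge_le_lintegral_div (by fun_prop)
          (by simpa using exp_pos _) ENNReal.ofReal_ne_top
    _ = _ := by
        rw [lintegral_exp_mul_norm_sub_sq_gaussianPi d μ hτ ht, exp_neg, ← div_eq_mul_inv,
          ENNReal.ofReal_div_of_pos (exp_pos _)]

lemma gaussianPi_norm_sub_gt_le_exp_log (d : ℕ) (μ : EuclideanSpace ℝ (Fin d)) {τ η r : ℝ}
    (hτ : τ ≠ 0) (hη : 0 ≤ η) (hr : 1 ≤ r) (hη_sq : η ^ 2 = d * r * τ ^ 2) :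
    gaussianPi d μ τ {z | η < ‖z - μ‖} ≤ ENNReal.ofReal (exp (d / 2 * (log r - r + 1))) := by
  have hr₀ : 0 < r := by linarith
  set t := (1 - r⁻¹) / (2 * τ ^ 2)
  have ht : 1 - 2 * t * τ ^ 2 = r⁻¹ := by simp only [t]; field_simp; ring
  have ht₀ : 0 ≤ t := div_nonneg (sub_nonneg.2 (inv_le_one_of_one_le₀ hr)) (by positivity)
  calc gaussianPi d μ τ {z | η < ‖z - μ‖}
      ≤ ENNReal.ofReal ((√(1 - 2 * t * τ ^ 2))⁻¹ ^ d * exp (-(t * η ^ 2))) :=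
        gaussianPi_norm_sub_gt_le d μ hτ ht₀ (by linarith [inv_pos.2 hr₀]) hη
    _ = ENNReal.ofReal (exp (d / 2 * (log r - r + 1))) := by
        have hsqrt : √r = exp (log r / 2) := by rw [← log_sqrt hr₀.le, exp_log (by positivity)]
        rw [ht, sqrt_inv, inv_inv, hsqrt, ← exp_nat_mul, ← exp_add, hη_sq]
        congr 2
        simp only [t]
        field_simp
        ring

/-- Gaussian norm tail bound: for `z ~ N(μ, τ² I_d)`, if
`(η/τ)² ≥ d + 2√(d η²/(4τ²)) + η²/(2τ²)` then `P(‖z − μ‖ > η) ≤ exp(−η²/(4τ²))`. -/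
theorem gaussian_norm_tail_bound (d : ℕ) (hd : 1 ≤ d) (μ : EuclideanSpace ℝ (Fin d))
    (τ η : ℝ) (hτ : 0 < τ) (hη : 0 < η)
    (hcond : (d : ℝ) + 2 * Real.sqrt ((d : ℝ) * η ^ 2 / (4 * τ ^ 2)) + η ^ 2 / (2 * τ ^ 2)
      ≤ (η / τ) ^ 2) :
    gaussianPi d μ τ {z : EuclideanSpace ℝ (Fin d) | η < ‖z - μ‖} ≤
      ENNReal.ofReal (Real.exp (-(η ^ 2) / (4 * τ ^ 2))) := by
  have hd₀ : (0 : ℝ) < d := by exact_mod_cast hd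
  set r := η ^ 2 / (d * τ ^ 2) with hr_def
  have hη_sq : η ^ 2 = d * r * τ ^ 2 := by rw [hr_def]; field_simp
  have hr : 2 + 2 * √r ≤ r := by
    have hsqrt : √(d * η ^ 2 / (4 * τ ^ 2)) = d / 2 * √r := by
      rw [show d * η ^ 2 / (4 * τ ^ 2) = (d / 2) ^ 2 * r by rw [hη_sq]; field_simp; ring,
        sqrt_mul (by positivity), sqrt_sq (by positivity)]
    rw [hsqrt, div_pow, hη_sq] at hcond
    field_simp at hcond
    nlinarith
  have hr₆ : 6 ≤ r := six_le_of_two_add_two_sqrt_le hr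
  calc gaussianPi d μ τ {z | η < ‖z - μ‖}
      ≤ ENNReal.ofReal (exp (d / 2 * (log r - r + 1))) :=
        gaussianPi_norm_sub_gt_le_exp_log d μ hτ.ne' hη.le (by linarith) hη_sq
    _ ≤ ENNReal.ofReal (exp (-(η ^ 2) / (4 * τ ^ 2))) := by
        refine ENNReal.ofReal_le_ofReal (exp_le_exp.2 ?_)
        have hlog := log_le_half_sub_one hr₆
        rw [hη_sq]
        field_simp
        nlinarith
end
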